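/- arXiv:1212.5837 — 2 statements merged into one kernel-verified Lean document; each statement's English description precedes it below -/
import Mathlib

section
/- Let d be an odd positive integer. With the explicit definition G̃_{n+1,q}^{(α)}(x) = (n+1)·(1+q)/(1-q^α)^n · Σ_{l=0}^{n} C(n,l)(-1)^l q^{αlx}/(1+q^{αl+1}), the distribution (multiplication) relation holds: G̃_{n,q}^{(α)}(d x) = ((1+q)/(1+q^d)) · ((1-q^{αd})/(1-q^α))^{n-1} · Σ_{a=0}^{d-1} (-1)^a q^a G̃_{n,q^d}^{(α)}(x + a/d), where G̃_{n,q^d}^{(α)} denotes the same polynomial with q replaced by q^d. -/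
open Finset Real

/-- The q-Genocchi polynomial with weight α (real version, rpow powers). -/
noncomputable def qGenocchiPoly (q : ℝ) (α : ℕ) : ℕ → ℝ → ℝ
  | 0, _ => 0
  | (n + 1), x =>
      (n + 1) * ((1 + q) / (1 - q ^ α) ^ n) *
        ∑ l ∈ range (n + 1), (n.choose l : ℝ) * (-1) ^ l *
          q ^ ((α * l : ℝ) * x) / (1 + q ^ (α * l + 1))

theorem qGenocchi_distribution_relation (q : ℝ) (hq0 : 0 < q) (hq1 : q < 1)
    (α : ℕ) (hα : 1 ≤ α) (n : ℕ) (hn : 1 ≤ n)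
    (d : ℕ) (hd : Odd d) (hd0 : 0 < d) (x : ℝ) :
    qGenocchiPoly q α n (d * x) =
      ((1 + q) / (1 + q ^ d)) * ((1 - q ^ (α * d)) / (1 - q ^ α)) ^ (n - 1) *
        ∑ a ∈ range d, (-1) ^ a * q ^ a *
          qGenocchiPoly (q ^ d) α n (x + a / d) := by
  obtain ⟨m, rfl⟩ : ∃ m, n = m + 1 := ⟨n - 1, by omega⟩
  have hdR : (d : ℝ) ≠ 0 := Nat.cast_ne_zero.mpr hd0.ne'
  have hqle : (0 : ℝ) ≤ q := hq0.le
  have hα0 : q ^ α < 1 := pow_lt_one₀ hqle hq1 (by omega)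
  have h1 : (1 : ℝ) - q ^ α ≠ 0 := by nlinarith
  have hqd1 : q ^ d < 1 := pow_lt_one₀ hqle hq1 hd0.ne'
  have hqd0 : (0 : ℝ) < q ^ d := pow_pos hq0 d
  have h2 : (1 : ℝ) + q ^ d ≠ 0 := by positivity
  have h3 : (1 : ℝ) - (q ^ d) ^ α ≠ 0 := by
    have := pow_lt_one₀ hqd0.le hqd1 (by omega : α ≠ 0)
    nlinarith
  simp only [qGenocchiPoly, Nat.add_sub_cancel]
  simp only [Finset.mul_sum, Finset.sum_mul]
  rw [Finset.sum_comm]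
  refine Finset.sum_congr rfl fun l hl => ?_
  have hD : (0 : ℝ) < 1 + q ^ (α * l + 1) := by positivity
  have hD' : (0 : ℝ) < 1 + (q ^ d) ^ (α * l + 1) := by positivity
  have key : ∀ a : ℕ, (q ^ d : ℝ) ^ ((α : ℝ) * l * (x + a / d)) =
      q ^ ((α : ℝ) * l * (d * x)) * q ^ (α * l * a) := by
    intro a
    rw [← Real.rpow_natCast q d, ← Real.rpow_mul hqle,
      ← Real.rpow_natCast q (α * l * a), ← Real.rpow_add hq0]
    congr 1
    push_cast
    field_simp
  simp only [key]
  have key2 : ∀ a : ℕ,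
      (1 + q) / (1 + q ^ d) * ((1 - q ^ (α * d)) / (1 - q ^ α)) ^ m *
        ((-1) ^ a * q ^ a *
          ((↑m + 1) * ((1 + q ^ d) / (1 - (q ^ d) ^ α) ^ m) *
            (↑(m.choose l) * (-1) ^ l * (q ^ ((α : ℝ) * l * (d * x)) * q ^ (α * l * a)) /
              (1 + (q ^ d) ^ (α * l + 1))))) =
      (-(q ^ (α * l + 1))) ^ a *
        ((1 + q) / (1 + q ^ d) * ((1 - q ^ (α * d)) / (1 - q ^ α)) ^ m *
          ((↑m + 1) * ((1 + q ^ d) / (1 - (q ^ d) ^ α) ^ m) *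
            (↑(m.choose l) * (-1) ^ l * q ^ ((α : ℝ) * l * (d * x)) /
              (1 + (q ^ d) ^ (α * l + 1))))) := by
    intro a
    have : q ^ a * q ^ (α * l * a) = (q ^ (α * l + 1)) ^ a := by
      rw [← pow_add, ← pow_mul]
      ring_nf
    conv_rhs => rw [neg_pow, ← this]
    ring
  rw [Finset.sum_congr rfl fun a _ => key2 a, ← Finset.sum_mul]
  have hr1 : -(q ^ (α * l + 1)) ≠ 1 := by nlinarith [pow_pos hq0 (α * l + 1)]
  rw [geom_sum_eq hr1]
  have hrd : (-(q ^ (α * l + 1))) ^ d = -((q ^ d) ^ (α * l + 1)) := by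
    rw [hd.neg_pow, ← pow_mul, ← pow_mul, Nat.mul_comm]
  rw [hrd, pow_mul' q α d]
  have hr2 : -(q ^ (α * l + 1)) - 1 ≠ 0 := by nlinarith [pow_pos hq0 (α * l + 1)]
  rw [div_pow]
  field_simp
  ring
end

section
/- For p an odd prime, q ∈ ℂ_p with |1-q|_p < 1, and a, n with 0 ≤ a < p^n, the values μ_q(a + p^n ℤ_p) = (-q)^a (1+q)/(1+q^{p^n}) satisfy the distribution relation: Σ_{i=0}^{p-1} μ_q(a + i·p^n + p^{n+1} ℤ_p) = μ_q(a + p^n ℤ_p). -/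
open Finset

/-- Kim's fermionic p-adic q-measure on a basic open set `a + p^n ℤ_p`. -/
noncomputable def muQ (p : ℕ) [Fact p.Prime] (q : ℚ_[p]) (a n : ℕ) : ℚ_[p] :=
  (-q) ^ a * (1 + q) / (1 + q ^ (p ^ n))

theorem muQ_distribution (p : ℕ) [Fact p.Prime] (hp : Odd p) (q : ℚ_[p])
    (hq : ‖1 - q‖ < 1) (n : ℕ) (a : ℕ) (ha : a < p ^ n) :
    ∑ i ∈ range p, muQ p q (a + i * p ^ n) (n + 1) = muQ p q a n := by
  have hp2 : (p : ℕ).Prime := Fact.out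
  have hqnorm : ‖q‖ ≤ 1 := by
    have h := Padic.nonarchimedean (1 : ℚ_[p]) (q - 1)
    have h1 : (1 : ℚ_[p]) + (q - 1) = q := by ring
    rw [h1] at h
    refine h.trans ?_
    rw [norm_sub_rev]
    simp [max_le_iff, hq.le]
  have hsub : ∀ m : ℕ, ‖(1 : ℚ_[p]) - q ^ m‖ < 1 := by
    intro m
    induction m with
    | zero => simpa using hq
    | succ k ih =>
      have h : (1 : ℚ_[p]) - q ^ (k + 1) = (1 - q ^ k) + q ^ k * (1 - q) := by ring
      rw [h]
      calc ‖(1 - q ^ k) + q ^ k * (1 - q)‖ ≤ max ‖1 - q ^ k‖ ‖q ^ k * (1 - q)‖ :=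
            Padic.nonarchimedean _ _
        _ < 1 := by
            rw [max_lt_iff]
            refine ⟨ih, ?_⟩
            rw [norm_mul]
            have hk : ‖q ^ k‖ ≤ 1 := by
              rw [norm_pow]
              exact pow_le_one₀ (norm_nonneg _) hqnorm
            calc ‖q ^ k‖ * ‖1 - q‖ ≤ 1 * ‖1 - q‖ :=
                  mul_le_mul_of_nonneg_right hk (norm_nonneg _)
              _ = ‖1 - q‖ := one_mul _
              _ < 1 := hq
  have hne : ∀ m : ℕ, (1 : ℚ_[p]) + q ^ m ≠ 0 := by
    intro m h0
    have h2 : (1 : ℚ_[p]) - q ^ m = 2 - (1 + q ^ m) := by ring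
    rw [h0, sub_zero] at h2
    have h3 : ‖(2 : ℚ_[p])‖ < 1 := h2 ▸ hsub m
    have h3' : ‖((2 : ℤ) : ℚ_[p])‖ < 1 := by push_cast; exact h3
    have h5 : (p : ℤ) ∣ 2 := (Padic.norm_intCast_lt_one_iff (k := 2)).mp h3'
    have h6 : p ∣ 2 := by exact_mod_cast h5
    have h7 : p = 2 := (Nat.prime_dvd_prime_iff_eq hp2 Nat.prime_two).mp h6
    rw [h7] at hp
    exact (Nat.not_even_iff_odd.mpr hp) even_two
  -- abbreviations
  set x := q ^ (p ^ n) with hxdef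
  have hx : q ^ (p ^ (n + 1)) = x ^ p := by rw [hxdef, ← pow_mul, ← pow_succ]
  have key : (∑ i ∈ range p, (-x) ^ i) * (1 + x) = 1 + x ^ p := by
    have := geom_sum_mul (-x) p
    have hodd : (-x) ^ p = -(x ^ p) := hp.neg_pow x
    rw [hodd] at this
    linear_combination -this
  have expand : ∀ i, (-q) ^ (a + i * p ^ n) = (-q) ^ a * (-x) ^ i := by
    intro i
    rw [pow_add, mul_comm i (p ^ n), pow_mul, (hp.pow).neg_pow]
  simp only [muQ, hx]
  rw [← sum_div]
  have hs : ∑ i ∈ range p, (-q) ^ (a + i * p ^ n) * (1 + q)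
      = (-q) ^ a * (1 + q) * ∑ i ∈ range p, (-x) ^ i := by
    rw [mul_sum]
    refine sum_congr rfl fun i _ => ?_
    rw [expand i]; ring
  rw [hs, ← hxdef]
  have hne1 : (1 : ℚ_[p]) + x ^ p ≠ 0 := by rw [← hx]; exact hne _
  have hne2 : (1 : ℚ_[p]) + x ≠ 0 := hxdef ▸ hne (p ^ n)
  rw [div_eq_div_iff hne1 hne2]
  linear_combination ((-q) ^ a * (1 + q)) * key
end
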